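/- Let X be a complex Banach space, 1 ≤ p < ∞, A a closed linear operator on X with domain D(A), B a bounded linear operator on X, r_1,…,r_n real numbers, and f ∈ L^p(𝕋;X). If x is a 2π-periodic strong L^p-solution of Eq. (1), then for every k ∈ ℤ the Fourier coefficient x̂(k) belongs to D(A) and (ikI − A − Σ_{j=1}^n e^{−ikr_j} B) x̂(k) = f̂(k). -/

import Mathlib

open MeasureTheory Real Complex Filter Finset intervalIntegral
open scoped ENNReal NNReal

noncomputable section

/-- `f` represents an element of `L^p(𝕋; X)`: it is `2π`-periodic and
`p`-integrable over one period `(0, 2π]`. -/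
def PeriodicLp {X : Type*} [NormedAddCommGroup X] (p : ℝ≥0∞) (f : ℝ → X) : Prop :=
  Function.Periodic f (2 * Real.pi) ∧
    MeasureTheory.MemLp f p (MeasureTheory.volume.restrict (Set.Ioc 0 (2 * Real.pi)))

/-- The `k`-th Fourier coefficient `f̂(k) = (1/(2π)) ∫₀^{2π} e^{-iks} f(s) ds`. -/
def fourierCoef {X : Type*} [NormedAddCommGroup X] [NormedSpace ℂ X] (f : ℝ → X) (k : ℤ) : X :=
  (1 / (2 * (Real.pi : ℂ))) •
    ∫ s in (0:ℝ)..(2 * Real.pi), Complex.exp (-Complex.I * (k : ℂ) * (s : ℂ)) • f s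

/-- A family `T ⊆ B(X, Y)` of bounded operators is `R`-bounded: there are `C > 0` and
`q ∈ [1, ∞)` such that for all `m`, all `T₁, …, T_m ∈ T` and `x₁, …, x_m ∈ X`,
`(2^{-m} Σ_{ε ∈ {-1,1}^m} ‖Σ_j ε_j T_j x_j‖^q)^{1/q} ≤
 C (2^{-m} Σ_{ε ∈ {-1,1}^m} ‖Σ_j ε_j x_j‖^q)^{1/q}`, where signs `ε ∈ {-1,1}^m` are
encoded by maps `Fin m → Bool`. -/
def RBounded {X Y : Type*} [NormedAddCommGroup X] [NormedSpace ℂ X]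
    [NormedAddCommGroup Y] [NormedSpace ℂ Y] (T : Set (X →L[ℂ] Y)) : Prop :=
  ∃ C q : ℝ, 0 < C ∧ 1 ≤ q ∧
    ∀ (m : ℕ) (Ts : Fin m → (X →L[ℂ] Y)) (x : Fin m → X), (∀ j, Ts j ∈ T) →
      (((2:ℝ)⁻¹) ^ m * ∑ ε : Fin m → Bool,
          ‖∑ j, (if ε j then (1:ℝ) else -1) • Ts j (x j)‖ ^ q) ^ (1/q) ≤
      C * ((((2:ℝ)⁻¹) ^ m * ∑ ε : Fin m → Bool,
          ‖∑ j, (if ε j then (1:ℝ) else -1) • x j‖ ^ q) ^ (1/q))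

/-- `{M_k}_{k ∈ ℤ}` is an `L^p`-multiplier: for each `f ∈ L^p(𝕋; X)` there is
`u ∈ L^p(𝕋; Y)` with `û(k) = M_k f̂(k)` for all `k`. -/
def IsLpMultiplier {X Y : Type*} [NormedAddCommGroup X] [NormedSpace ℂ X]
    [NormedAddCommGroup Y] [NormedSpace ℂ Y] (p : ℝ≥0∞) (M : ℤ → (X →L[ℂ] Y)) : Prop :=
  ∀ f : ℝ → X, PeriodicLp p f →
    ∃ u : ℝ → Y, PeriodicLp p u ∧ ∀ k : ℤ, fourierCoef u k = M k (fourierCoef f k)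

/-- `u` represents an element of `H^{1,p}(𝕋; X)`: `u ∈ L^p(𝕋; X)` and there is
`v ∈ L^p(𝕋; X)` with `v̂(k) = ik û(k)` for all `k`. -/
def MemH1p {X : Type*} [NormedAddCommGroup X] [NormedSpace ℂ X] (p : ℝ≥0∞) (u : ℝ → X) : Prop :=
  PeriodicLp p u ∧ ∃ v : ℝ → X, PeriodicLp p v ∧
    ∀ k : ℤ, fourierCoef v k = (Complex.I * (k : ℂ)) • fourierCoef u k

/-- The (possibly unbounded) linear operator `A` with domain `D` is closed. -/
def IsClosedOp {X : Type*} [NormedAddCommGroup X] [NormedSpace ℂ X]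
    (D : Submodule ℂ X) (A : D →ₗ[ℂ] X) : Prop :=
  ∀ (x : ℕ → D) (a b : X),
    Filter.Tendsto (fun m => (x m : X)) Filter.atTop (nhds a) →
    Filter.Tendsto (fun m => A (x m)) Filter.atTop (nhds b) →
    ∃ ha : a ∈ D, A ⟨a, ha⟩ = b

/-- `x` is a `2π`-periodic strong `L^p`-solution of
`x′(t) = A x(t) + Σ_{j=1}^n B x(t - r_j) + f(t)`, `x(0) = x(2π)`: it belongs to
`H^{1,p}(𝕋; X)` (with `v` playing the role of `x′`), `x(t) ∈ D(A)` a.e. and the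
equation holds almost everywhere on a period. -/
def IsStrongSolution {X : Type*} [NormedAddCommGroup X] [NormedSpace ℂ X]
    (p : ℝ≥0∞) (D : Submodule ℂ X) (A : D →ₗ[ℂ] X) (B : X →L[ℂ] X)
    {n : ℕ} (r : Fin n → ℝ) (f : ℝ → X) (x : ℝ → X) : Prop :=
  PeriodicLp p x ∧
  ∃ v : ℝ → X, PeriodicLp p v ∧
    (∀ k : ℤ, fourierCoef v k = (Complex.I * (k : ℂ)) • fourierCoef x k) ∧
    ∀ᵐ t ∂(MeasureTheory.volume.restrict (Set.Ioc 0 (2 * Real.pi))),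
      ∃ hx : x t ∈ D, v t = A ⟨x t, hx⟩ + (∑ j, B (x (t - r j))) + f t

/-! The graph of a closed operator is a closed subspace of `X × X`, and the integral of a function
taking values a.e. in a closed subspace lies in that subspace. For `g = x′ - Σⱼ B x(· - rⱼ) - f`
the equation says that `(x(t), g(t))` lies in the graph of `A` for a.e. `t`, hence so does
`(x̂(k), ĝ(k))`. Linearity of the Fourier coefficients and the shift rule
`(x(· - r))^(k) = e^{-ikr} x̂(k)` for periodic `x` then compute `ĝ(k)`. -/

theorem integral_mem_of_ae_mem {α E : Type*} [MeasurableSpace α] {μ : Measure α}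
    [IsFiniteMeasure μ] [NormedAddCommGroup E] [NormedSpace ℝ E] [CompleteSpace E]
    {S : Submodule ℝ E} (hS : IsClosed (S : Set E)) {f : α → E}
    (hf : ∀ᵐ a ∂μ, f a ∈ S) : ∫ a, f a ∂μ ∈ S := by
  by_cases hfi : Integrable f μ
  · rcases eq_zero_or_neZero μ with rfl | _
    · rw [integral_zero_measure]
      exact S.zero_mem
    rw [← measure_smul_average]
    exact S.smul_mem _ (S.convex.average_mem hS hf hfi)
  · rw [integral_undef hfi]
    exact S.zero_mem

theorem LinearPMap.mk_mem_graph_iff {R E F : Type*} [Ring R] [AddCommGroup E] [Module R E]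
    [AddCommGroup F] [Module R F] {D : Submodule R E} {A : D →ₗ[R] F} {a : E} {b : F} :
    (a, b) ∈ (LinearPMap.mk D A).graph ↔ ∃ h : a ∈ D, A ⟨a, h⟩ = b := by
  rw [LinearPMap.mem_graph_iff]
  constructor
  · rintro ⟨⟨a, h⟩, rfl, rfl⟩
    exact ⟨h, rfl⟩
  · rintro ⟨h, rfl⟩
    exact ⟨⟨a, h⟩, rfl, rfl⟩

theorem IsClosedOp.isClosed {X : Type*} [NormedAddCommGroup X] [NormedSpace ℂ X]
    {D : Submodule ℂ X} {A : D →ₗ[ℂ] X} (hA : IsClosedOp D A) :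
    (LinearPMap.mk D A).IsClosed := by
  refine IsSeqClosed.isClosed fun u l hu hul => ?_
  choose d hd using fun m => (LinearPMap.mem_graph_iff' _).mp (hu m)
  obtain rfl : (fun m => ((d m : X), A (d m))) = u := funext hd
  obtain ⟨hl, hAl⟩ := hA d l.1 l.2
    ((continuous_fst.tendsto l).comp hul) ((continuous_snd.tendsto l).comp hul)
  exact LinearPMap.mk_mem_graph_iff.mpr ⟨hl, hAl⟩

theorem PeriodicLp.intervalIntegrable {X : Type*} [NormedAddCommGroup X] {p : ℝ≥0∞}
    {f : ℝ → X} (hf : PeriodicLp p f) (hp : 1 ≤ p) (a b : ℝ) :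
    IntervalIntegrable f volume a b :=
  hf.1.intervalIntegrable₀ (by positivity)
    ((intervalIntegrable_iff_integrableOn_Ioc_of_le (by positivity)).mpr
      (hf.2.integrable hp)) a b

theorem PeriodicLp.intervalIntegrable_comp_sub {X : Type*} [NormedAddCommGroup X]
    {p : ℝ≥0∞} {f : ℝ → X} (hf : PeriodicLp p f) (hp : 1 ≤ p) (r a b : ℝ) :
    IntervalIntegrable (fun t => f (t - r)) volume a b := by
  simpa using (hf.intervalIntegrable hp (a - r) (b - r)).comp_sub_right r

theorem periodic_cexp_neg_I_mul_int_mul (k : ℤ) :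
    Function.Periodic (fun t : ℝ => cexp (-I * k * t)) (2 * π) := fun t => by
  dsimp only
  have : -I * k * ↑(t + 2 * π) = -I * k * t + (-k : ℤ) * (2 * π * I) := by push_cast; ring
  rw [this, Complex.exp_add, Complex.exp_int_mul_two_pi_mul_I, mul_one]

section FourierCoef

variable {E F : Type*} [NormedAddCommGroup E] [NormedSpace ℂ E]
  [NormedAddCommGroup F] [NormedSpace ℂ F] {f g : ℝ → E}

theorem IntervalIntegrable.cexp_smul (hf : IntervalIntegrable f volume 0 (2 * π)) (k : ℤ) :
    IntervalIntegrable (fun s : ℝ => cexp (-I * k * s) • f s) volume 0 (2 * π) :=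
  hf.continuousOn_smul (by fun_prop)

theorem fourierCoef_sub (hf : IntervalIntegrable f volume 0 (2 * π))
    (hg : IntervalIntegrable g volume 0 (2 * π)) (k : ℤ) :
    fourierCoef (fun t => f t - g t) k = fourierCoef f k - fourierCoef g k := by
  simp only [fourierCoef, smul_sub, integral_sub (hf.cexp_smul k) (hg.cexp_smul k)]

theorem fourierCoef_sum {ι : Type*} (s : Finset ι) {f : ι → ℝ → E}
    (hf : ∀ i ∈ s, IntervalIntegrable (f i) volume 0 (2 * π)) (k : ℤ) :
    fourierCoef (fun t => ∑ i ∈ s, f i t) k = ∑ i ∈ s, fourierCoef (f i) k := by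
  simp only [fourierCoef, Finset.smul_sum,
    intervalIntegral.integral_finsetSum fun i hi => (hf i hi).cexp_smul k]

theorem ContinuousLinearMap.fourierCoef_comp [CompleteSpace E] [CompleteSpace F] (L : E →L[ℂ] F)
    (hf : IntervalIntegrable f volume 0 (2 * π)) (k : ℤ) :
    fourierCoef (fun t => L (f t)) k = L (fourierCoef f k) := by
  simp only [fourierCoef, map_smul, ← L.intervalIntegral_comp_comm (hf.cexp_smul k)]

theorem fourierCoef_prodMk [CompleteSpace E] [CompleteSpace F] {g : ℝ → F}
    (hf : IntervalIntegrable f volume 0 (2 * π)) (hg : IntervalIntegrable g volume 0 (2 * π))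
    (k : ℤ) : fourierCoef (fun t => (f t, g t)) k = (fourierCoef f k, fourierCoef g k) := by
  have hfg : IntervalIntegrable (fun t => (f t, g t)) volume 0 (2 * π) :=
    ⟨hf.1.prodMk hg.1, hf.2.prodMk hg.2⟩
  ext
  · exact ((ContinuousLinearMap.fst ℂ E F).fourierCoef_comp hfg k).symm
  · exact ((ContinuousLinearMap.snd ℂ E F).fourierCoef_comp hfg k).symm

theorem Function.Periodic.fourierCoef_comp_sub (hf : Function.Periodic f (2 * π)) (k : ℤ)
    (r : ℝ) : fourierCoef (fun t => f (t - r)) k = cexp (-I * k * r) • fourierCoef f k := by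
  set e : ℝ → ℂ := fun s => cexp (-I * k * s)
  have hper : Function.Periodic (fun s => e s • f s) (2 * π) := fun s => by
    simp only [e, periodic_cexp_neg_I_mul_int_mul k s, hf s]
  have key : ∫ s in 0..2 * π, e s • f (s - r) = e r • ∫ s in 0..2 * π, e s • f s := calc
    _ = ∫ s in 0..2 * π, e r • (e (s - r) • f (s - r)) := integral_congr fun s _ => by
          simp only [e, smul_smul, ← Complex.exp_add]
          push_cast
          ring_nf
    _ = e r • ∫ s in -r..-r + 2 * π, e s • f s := by
          rw [intervalIntegral.integral_smul, integral_comp_sub_right (fun s => e s • f s)]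
          ring_nf
    _ = e r • ∫ s in 0..2 * π, e s • f s := by
          rw [hper.intervalIntegral_add_eq (-r) 0, zero_add]
  rw [fourierCoef, fourierCoef, key, smul_comm]

theorem fourierCoef_mem_of_ae_mem [CompleteSpace E] {S : Submodule ℂ E}
    (hS : IsClosed (S : Set E)) (hf : ∀ᵐ t ∂volume.restrict (Set.Ioc 0 (2 * π)), f t ∈ S)
    (k : ℤ) : fourierCoef f k ∈ S := by
  rw [fourierCoef, integral_of_le (by positivity)]
  exact S.smul_mem _ <| integral_mem_of_ae_mem (S := S.restrictScalars ℝ) hS <|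
    hf.mono fun t ht => S.smul_mem _ ht

end FourierCoef

theorem strong_solution_fourierCoef_general {X : Type*}
    [NormedAddCommGroup X] [NormedSpace ℂ X] [CompleteSpace X]
    (p : ℝ≥0∞) (hp1 : 1 ≤ p)
    (D : Submodule ℂ X) (A : D →ₗ[ℂ] X) (hA : IsClosedOp D A)
    (B : X →L[ℂ] X) (n : ℕ) (r : Fin n → ℝ)
    (f x : ℝ → X) (hf : PeriodicLp p f)
    (hx : IsStrongSolution p D A B r f x) (k : ℤ) :
    ∃ h : fourierCoef x k ∈ D,
      (Complex.I * (k : ℂ)) • fourierCoef x k - A ⟨fourierCoef x k, h⟩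
        - ∑ j, Complex.exp (-Complex.I * (k : ℂ) * (r j : ℂ)) • B (fourierCoef x k)
      = fourierCoef f k := by
  obtain ⟨hxLp, v, hvLp, hv, hsol⟩ := hx
  have hx_int (s : ℝ) : IntervalIntegrable (fun t => x (t - s)) volume 0 (2 * π) :=
    hxLp.intervalIntegrable_comp_sub hp1 s 0 (2 * π)
  have hBx_int (j : Fin n) : IntervalIntegrable (fun t => B (x (t - r j))) volume 0 (2 * π) :=
    ⟨B.integrable_comp (hx_int (r j)).1, B.integrable_comp (hx_int (r j)).2⟩
  have hx_int₀ := hxLp.intervalIntegrable hp1 0 (2 * π)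
  have hf_int := hf.intervalIntegrable hp1 0 (2 * π)
  have hv_int := hvLp.intervalIntegrable hp1 0 (2 * π)
  have hsum_int : IntervalIntegrable (fun t => ∑ j, B (x (t - r j))) volume 0 (2 * π) := by
    simpa only [Finset.sum_fn] using IntervalIntegrable.sum univ fun j _ => hBx_int j
  set g : ℝ → X := fun t => v t - ∑ j, B (x (t - r j)) - f t
  have hgraph : ∀ᵐ t ∂volume.restrict (Set.Ioc 0 (2 * π)),
      (x t, g t) ∈ (LinearPMap.mk D A).graph :=
    hsol.mono fun t ⟨hxt, hvt⟩ =>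
      LinearPMap.mk_mem_graph_iff.mpr ⟨hxt, by simp only [g, hvt]; abel⟩
  have hcoef := fourierCoef_mem_of_ae_mem hA.isClosed hgraph k
  rw [fourierCoef_prodMk hx_int₀ ((hv_int.sub hsum_int).sub hf_int)] at hcoef
  obtain ⟨hmem, hAx⟩ := LinearPMap.mk_mem_graph_iff.mp hcoef
  have hshift (j : Fin n) : fourierCoef (fun t => B (x (t - r j))) k
      = cexp (-I * k * r j) • B (fourierCoef x k) := by
    rw [B.fourierCoef_comp (hx_int (r j)), hxLp.1.fourierCoef_comp_sub, map_smul]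
  have hg : fourierCoef g k = (I * k) • fourierCoef x k
      - ∑ j, cexp (-I * k * r j) • B (fourierCoef x k) - fourierCoef f k := by
    rw [fourierCoef_sub (hv_int.sub hsum_int) hf_int, fourierCoef_sub hv_int hsum_int,
      fourierCoef_sum _ fun j _ => hBx_int j, hv k]
    simp only [hshift]
  exact ⟨hmem, by rw [hAx, hg]; abel⟩

/-- If `x` is a `2π`-periodic strong `L^p`-solution of Eq. (1) with
`f ∈ L^p(𝕋; X)`, then for every `k ∈ ℤ` one has `x̂(k) ∈ D(A)` and
`(ikI - A - Σ_j e^{-ikr_j} B) x̂(k) = f̂(k)`. -/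
theorem strong_solution_fourierCoef {X : Type*}
    [NormedAddCommGroup X] [NormedSpace ℂ X] [CompleteSpace X]
    (p : ℝ≥0∞) (hp1 : 1 ≤ p) (hp2 : p < ⊤)
    (D : Submodule ℂ X) (A : D →ₗ[ℂ] X) (hA : IsClosedOp D A)
    (B : X →L[ℂ] X) (n : ℕ) (r : Fin n → ℝ)
    (f x : ℝ → X) (hf : PeriodicLp p f)
    (hx : IsStrongSolution p D A B r f x) (k : ℤ) :
    ∃ h : fourierCoef x k ∈ D,
      (Complex.I * (k : ℂ)) • fourierCoef x k - A ⟨fourierCoef x k, h⟩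
        - ∑ j, Complex.exp (-Complex.I * (k : ℂ) * (r j : ℂ)) • B (fourierCoef x k)
      = fourierCoef f k :=
  strong_solution_fourierCoef_general p hp1 D A hA B n r f x hf hx k

end
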